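/- Fix k ≥ 1 and a line digraph I_k. Let 𝔻_k be the category whose objects are the digraph cubes I_k^n (n ≥ 0) and whose morphisms are generated under composition by the face inclusions δ_i^α : I_k^{n−1} → I_k^n for α ∈ {0,k} (inserting the vertex coordinate α at position i) and the projections σ_i : I_k^n → I_k^{n−1} (deleting the i-th coordinate), all of which are digraph maps. Then the category 𝔻_k is isomorphic to the box category □. -/

import Mathlib

noncomputable section

/-- Insert the value `c` at (1-based) position `i` into an `m`-tuple,
producing an `(m+1)`-tuple.  (The index is clamped into the valid range;
for `1 ≤ i ≤ m+1` this is exactly the face-insertion of the box category.) -/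
def finsert {X : Type} {m : ℕ} (i : ℕ) (c : X) (x : Fin m → X) : Fin (m + 1) → X :=
  Fin.insertNth ⟨min (i - 1) m, Nat.lt_succ_of_le (Nat.min_le_right _ _)⟩ c x

/-- Delete the (1-based) `i`-th coordinate of an `(m+1)`-tuple, producing an
`m`-tuple.  (The index is clamped into the valid range; for `1 ≤ i ≤ m+1`
this is exactly the projection of the box category.) -/
def fdelete {X : Type} {m : ℕ} (i : ℕ) (x : Fin (m + 1) → X) : Fin m → X :=
  fun j => x (Fin.succAbove ⟨min (i - 1) m, Nat.lt_succ_of_le (Nat.min_le_right _ _)⟩ j)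

/-- A digraph: a vertex set together with an (irreflexive, by intent)
adjacency relation `v → w`. -/
structure Dgraph where
  V : Type
  adj : V → V → Prop

/-- The line digraph `I_k` on vertices `{0,…,k}`: for each `0 ≤ i ≤ k-1`
exactly one arrow, `i → i+1` if `o i = true` and `i+1 → i` otherwise,
and no other arrows. -/
def lineDigraph (k : ℕ) (o : ℕ → Bool) : Dgraph where
  V := Fin (k + 1)
  adj v w := ∃ i : Fin k,
    (o i.val = true ∧ v = i.castSucc ∧ w = i.succ) ∨
    (o i.val = false ∧ v = i.succ ∧ w = i.castSucc)

/-- The `n`-cube digraph `I_k^n` (the `n`-fold box product of `I_k`):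
vertices are `n`-tuples, with an arrow when exactly one coordinate moves
along an arrow of `I_k` and all other coordinates agree. -/
def cubeDigraph (k : ℕ) (o : ℕ → Bool) (n : ℕ) : Dgraph where
  V := Fin n → Fin (k + 1)
  adj x y := ∃ j : Fin n, (lineDigraph k o).adj (x j) (y j) ∧ ∀ i, i ≠ j → x i = y i

/-- The morphisms of the category `𝔻_k`: all maps (on vertex sets of the cube
digraphs `I_k^n`) generated under composition by the face inclusions
`δᵢ^α` (`α ∈ {0,k}`, inserting the vertex coordinate `α` at 1-based position `i`)
and the projections `σᵢ` (deleting the `i`-th coordinate). -/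
inductive DkGen (k : ℕ) (o : ℕ → Bool) :
    (n m : ℕ) → ((Fin n → Fin (k + 1)) → (Fin m → Fin (k + 1))) → Prop
  | id (n : ℕ) : DkGen k o n n (fun x => x)
  | delta (n i : ℕ) (α : Bool) (h1 : 1 ≤ i) (h2 : i ≤ n + 1) :
      DkGen k o n (n + 1) (finsert i (if α then Fin.last k else 0))
  | sigma (n i : ℕ) (h1 : 1 ≤ i) (h2 : i ≤ n + 1) :
      DkGen k o (n + 1) n (fdelete i)
  | comp {n m l : ℕ} {f : (Fin n → Fin (k+1)) → (Fin m → Fin (k+1))}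
      {g : (Fin m → Fin (k+1)) → (Fin l → Fin (k+1))} :
      DkGen k o n m f → DkGen k o m l g → DkGen k o n l (fun x => g (f x))

/-- The morphisms of the box category `□`: all maps `𝕀^n → 𝕀^m` generated
under composition by the face inclusions `δᵢ^α` (`α ∈ 𝕀`) and projections `σᵢ`. -/
inductive BGen : (n m : ℕ) → ((Fin n → Bool) → (Fin m → Bool)) → Prop
  | id (n : ℕ) : BGen n n (fun x => x)
  | delta (n i : ℕ) (α : Bool) (h1 : 1 ≤ i) (h2 : i ≤ n + 1) : BGen n (n + 1) (finsert i α)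
  | sigma (n i : ℕ) (h1 : 1 ≤ i) (h2 : i ≤ n + 1) : BGen (n + 1) n (fdelete i)
  | comp {n m l : ℕ} {f : (Fin n → Bool) → (Fin m → Bool)}
      {g : (Fin m → Bool) → (Fin l → Bool)} :
      BGen n m f → BGen m l g → BGen n l (fun x => g (f x))

open CategoryTheory

/-- The category `𝔻_k`: objects are the cube digraphs `I_k^n` (indexed by `n`),
morphisms are the compositions of face inclusions and projections. -/
def DkCat (k : ℕ) (o : ℕ → Bool) : Type := ℕ

instance (k : ℕ) (o : ℕ → Bool) : Category (DkCat k o) where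
  Hom n m := { f : (Fin n → Fin (k + 1)) → (Fin m → Fin (k + 1)) // DkGen k o n m f }
  id n := ⟨fun x => x, DkGen.id n⟩
  comp f g := ⟨fun x => g.1 (f.1 x), DkGen.comp f.2 g.2⟩
  id_comp f := Subtype.ext rfl
  comp_id f := Subtype.ext rfl
  assoc f g h := Subtype.ext rfl

/-- The box category `□`: objects are the sets `𝕀^n` (indexed by `n`),
morphisms are the compositions of face inclusions and projections. -/
def BoxCat : Type := ℕ

instance : Category BoxCat where
  Hom n m := { f : (Fin n → Bool) → (Fin m → Bool) // BGen n m f }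
  id n := ⟨fun x => x, BGen.id n⟩
  comp f g := ⟨fun x => g.1 (f.1 x), BGen.comp f.2 g.2⟩
  id_comp f := Subtype.ext rfl
  comp_id f := Subtype.ext rfl
  assoc f g h := Subtype.ext rfl

/-!
A generated map of cubes never mixes coordinates: each output coordinate is either some input
coordinate or a constant endpoint. Such a map is therefore determined by a code
`Fin m → Fin n ⊕ Bool`, and evaluating a code on `I_k^n` (endpoints `0, k`) or on `𝕀^n`
(endpoints `false, true`) is injective as soon as the two endpoints differ, i.e. `k ≥ 1`.
Face inclusions, projections and composites have the same codes on both sides, so sending a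
generated map to the evaluation of its code on the other side gives mutually inverse functors.
-/

lemma comp_finsert {X Y : Type} {m : ℕ} (φ : X → Y) (i : ℕ) (c : X) (x : Fin m → X) :
    φ ∘ finsert i c x = finsert i (φ c) (φ ∘ x) := by
  suffices ∀ p : Fin (m + 1), φ ∘ Fin.insertNth p c x = Fin.insertNth p (φ c) (φ ∘ x) from
    this _
  intro p
  funext j
  refine Fin.succAboveCases p ?_ (fun j => ?_) j <;> simp

/-- Output coordinate `j` of the coded map copies input coordinate `r` if the code at `j` is
`Sum.inl r`, and is the endpoint `b` if it is `Sum.inr b`. -/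
abbrev CubeCode (n m : ℕ) : Type := Fin m → Fin n ⊕ Bool

namespace CubeCode

variable {X : Type} {n m l : ℕ}

def eval (v : Bool → X) (c : CubeCode n m) (x : Fin n → X) : Fin m → X :=
  Sum.elim x v ∘ c

def comp (c : CubeCode n m) (d : CubeCode m l) : CubeCode n l :=
  Sum.elim c Sum.inr ∘ d

def insert (i : ℕ) (b : Bool) : CubeCode n (n + 1) :=
  finsert i (Sum.inr b) Sum.inl

def delete (i : ℕ) : CubeCode (n + 1) n :=
  fdelete i Sum.inl

lemma eval_comp (v : Bool → X) (c : CubeCode n m) (d : CubeCode m l) :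
    (c.comp d).eval v = fun x => d.eval v (c.eval v x) := by
  funext x j
  cases h : d j <;> simp [eval, comp, h]

lemma eval_insert (v : Bool → X) (i : ℕ) (b : Bool) :
    (insert i b : CubeCode n (n + 1)).eval v = finsert i (v b) := by
  funext x
  exact comp_finsert _ _ _ _

lemma eq_of_forall_elim_eq {v : Bool → X} (hv : Function.Injective v) {s t : Fin n ⊕ Bool}
    (h : ∀ x : Fin n → X, Sum.elim x v s = Sum.elim x v t) : s = t := by
  have hne : v false ≠ v true := hv.ne Bool.false_ne_true
  rcases s with r | β <;> rcases t with r' | β'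
  · have hr := h fun i => v (decide (i = r))
    simp only [Sum.elim_inl, decide_true] at hr
    have := hv hr
    simp_all
  · exact absurd ((h fun _ => v false).trans (h fun _ => v true).symm) hne
  · exact absurd ((h fun _ => v false).symm.trans (h fun _ => v true)) hne
  · exact congrArg Sum.inr (hv (h fun _ => v false))

lemma eval_injective {v : Bool → X} (hv : Function.Injective v) :
    Function.Injective (eval v : CubeCode n m → (Fin n → X) → Fin m → X) := fun _ _ h =>
  funext fun j => eq_of_forall_elim_eq hv fun x => congrFun (congrFun h x) j

end CubeCode

def endpoint (k : ℕ) (b : Bool) : Fin (k + 1) :=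
  if b then Fin.last k else 0

lemma endpoint_injective {k : ℕ} (hk : 1 ≤ k) : Function.Injective (endpoint k) := by
  intro a b h
  cases a <;> cases b <;> simp [endpoint, Fin.ext_iff] at h ⊢ <;> omega

lemma DkGen.exists_code {k : ℕ} {o : ℕ → Bool} {n m : ℕ}
    {f : (Fin n → Fin (k + 1)) → Fin m → Fin (k + 1)} (h : DkGen k o n m f) :
    ∃ c : CubeCode n m, f = c.eval (endpoint k) ∧ BGen n m (c.eval _root_.id) := by
  induction h with
  | id n => exact ⟨Sum.inl, rfl, BGen.id n⟩
  | delta n i α h1 h2 =>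
    refine ⟨CubeCode.insert i α, (CubeCode.eval_insert (endpoint k) i α).symm, ?_⟩
    rw [CubeCode.eval_insert]
    exact BGen.delta n i α h1 h2
  | sigma n i h1 h2 => exact ⟨CubeCode.delete i, rfl, BGen.sigma n i h1 h2⟩
  | comp _ _ ihf ihg =>
    obtain ⟨c, rfl, hc⟩ := ihf
    obtain ⟨d, rfl, hd⟩ := ihg
    exact ⟨c.comp d, (CubeCode.eval_comp _ _ _).symm,
      CubeCode.eval_comp _ _ _ ▸ BGen.comp hc hd⟩

lemma BGen.exists_code (k : ℕ) (o : ℕ → Bool) {n m : ℕ}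
    {g : (Fin n → Bool) → Fin m → Bool} (h : BGen n m g) :
    ∃ c : CubeCode n m, g = c.eval _root_.id ∧ DkGen k o n m (c.eval (endpoint k)) := by
  induction h with
  | id n => exact ⟨Sum.inl, rfl, DkGen.id n⟩
  | delta n i α h1 h2 =>
    refine ⟨CubeCode.insert i α, (CubeCode.eval_insert _root_.id i α).symm, ?_⟩
    rw [CubeCode.eval_insert]
    exact DkGen.delta n i α h1 h2
  | sigma n i h1 h2 => exact ⟨CubeCode.delete i, rfl, DkGen.sigma n i h1 h2⟩
  | comp _ _ ihf ihg =>
    obtain ⟨c, rfl, hc⟩ := ihf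
    obtain ⟨d, rfl, hd⟩ := ihg
    exact ⟨c.comp d, (CubeCode.eval_comp _ _ _).symm,
      CubeCode.eval_comp _ _ _ ▸ DkGen.comp hc hd⟩

section Transfer

variable {X Y : Type} {v : Bool → X} {w : Bool → Y}
  {P : (n m : ℕ) → ((Fin n → X) → Fin m → X) → Prop}
  {Q : (n m : ℕ) → ((Fin n → Y) → Fin m → Y) → Prop}
  {n m l : ℕ}

def transfer
    (hPQ : ∀ {n m f}, P n m f → ∃ c : CubeCode n m, f = c.eval v ∧ Q n m (c.eval w))
    (f : { f // P n m f }) : { g // Q n m g } :=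
  ⟨(Classical.choose (hPQ f.2)).eval w, (Classical.choose_spec (hPQ f.2)).2⟩

variable (hPQ : ∀ {n m f}, P n m f → ∃ c : CubeCode n m, f = c.eval v ∧ Q n m (c.eval w))

lemma transfer_val_of_eq_eval (hv : Function.Injective v) (f : { f // P n m f })
    {c : CubeCode n m} (hc : f.1 = c.eval v) : (transfer hPQ f).1 = c.eval w :=
  congrArg (CubeCode.eval w)
    (CubeCode.eval_injective hv ((Classical.choose_spec (hPQ f.2)).1.symm.trans hc))

lemma transfer_id (hv : Function.Injective v) (h : P n n fun x => x) :
    (transfer hPQ ⟨_, h⟩).1 = fun x => x :=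
  transfer_val_of_eq_eval hPQ hv ⟨_, h⟩ (c := Sum.inl) rfl

lemma transfer_comp (hv : Function.Injective v) (f : { f // P n m f }) (g : { g // P m l g })
    (h : P n l fun x => g.1 (f.1 x)) :
    (transfer hPQ ⟨_, h⟩).1 = fun x => (transfer hPQ g).1 ((transfer hPQ f).1 x) := by
  obtain ⟨c, hc, -⟩ := hPQ f.2
  obtain ⟨d, hd, -⟩ := hPQ g.2
  rw [transfer_val_of_eq_eval hPQ hv f hc, transfer_val_of_eq_eval hPQ hv g hd,
    transfer_val_of_eq_eval hPQ hv _ (c := c.comp d) (by rw [CubeCode.eval_comp, ← hc, ← hd]),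
    CubeCode.eval_comp]

lemma transfer_transfer (hw : Function.Injective w)
    (hQP : ∀ {n m g}, Q n m g → ∃ c : CubeCode n m, g = c.eval w ∧ P n m (c.eval v))
    (f : { f // P n m f }) : (transfer hQP (transfer hPQ f)).1 = f.1 :=
  (transfer_val_of_eq_eval hQP hw _ rfl).trans (Classical.choose_spec (hPQ f.2)).1.symm

end Transfer

def DkCat.toBoxCat (k : ℕ) (hk : 1 ≤ k) (o : ℕ → Bool) : DkCat k o ⥤ BoxCat where
  obj n := n
  map f := transfer DkGen.exists_code f
  map_id _ := Subtype.ext (transfer_id DkGen.exists_code (endpoint_injective hk) _)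
  map_comp f g := Subtype.ext (transfer_comp DkGen.exists_code (endpoint_injective hk) f g _)

def BoxCat.toDkCat (k : ℕ) (o : ℕ → Bool) : BoxCat ⥤ DkCat k o where
  obj n := n
  map f := transfer (BGen.exists_code k o) f
  map_id _ := Subtype.ext (transfer_id (BGen.exists_code k o) Function.injective_id _)
  map_comp f g := Subtype.ext (transfer_comp (BGen.exists_code k o) Function.injective_id f g _)

/-- For every `k ≥ 1` and every line digraph `I_k`
(orientation `o`), the category `𝔻_k` — whose objects are the digraph cubes
`I_k^n` and whose morphisms are generated by the face inclusions
`δᵢ^α` (`α ∈ {0,k}`) and projections `σᵢ` — is isomorphic to the box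
category `□`. -/
theorem Dk_iso_box (k : ℕ) (hk : 1 ≤ k) (o : ℕ → Bool) :
    ∃ (F : DkCat k o ⥤ BoxCat) (G : BoxCat ⥤ DkCat k o),
      F ⋙ G = CategoryTheory.Functor.id (DkCat k o) ∧
      G ⋙ F = CategoryTheory.Functor.id BoxCat := by
  refine ⟨DkCat.toBoxCat k hk o, BoxCat.toDkCat k o, ?_, ?_⟩
  · exact CategoryTheory.Functor.ext (fun _ => rfl) fun _ _ f =>
      Subtype.ext <|
        transfer_transfer DkGen.exists_code Function.injective_id (BGen.exists_code k o) f
  · exact CategoryTheory.Functor.ext (fun _ => rfl) fun _ _ f =>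
      Subtype.ext <|
        transfer_transfer (BGen.exists_code k o) (endpoint_injective hk) DkGen.exists_code f
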